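/- Let A be an n × n real matrix partitioned into an N × N block matrix with square diagonal blocks A_{ii} of size b_i × b_i, and let t = (t_1; …; t_N) be a vector of size n partitioned conformally. Suppose blocks C̄_{ij} (for 1 ≤ i, j ≤ N) are given satisfying: C̄_{ij} = A_{ij} whenever i = 1 or j = 1, and otherwise C̄_{ij} = A_{ij} − Σ_{k=1}^{min(i,j)−1} L̄_{ik} F̄_{kj} Ū_{kj}, where L̄_{ik} = C̄_{ik} for i > k, Ū_{kj} = C̄_{kj} for k < j, the diagonal blocks D̄_{kk} = C̄_{kk} are invertible, and each F̄_{kj} is a b_k × b_k matrix satisfying the filtering condition F̄_{kj} (Ū_{kj} t_j) = D̄_{kk}^{-1} (Ū_{kj} t_j). Let M = (L̄ + D̄) D̄^{-1} (Ū + D̄), where L̄ is the strictly block lower triangular part, Ū the strictly block upper triangular part, and D̄ the block diagonal part formed by the C̄_{ij}. Then M satisfies the right filtering property M t = A t. -/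

import Mathlib

/-!
Since `D̄ D̄⁻¹ = D̄⁻¹ D̄ = 1`, expanding gives `M = L̄ D̄⁻¹ Ū + (L̄ + D̄ + Ū)`, and the blocks of
`L̄ + D̄ + Ū` are exactly the `C̄ᵢⱼ`. The `(i,j)` block of `L̄ D̄⁻¹ Ū` is
`Σ_{k < min(i,j)} C̄ᵢₖ C̄ₖₖ⁻¹ C̄ₖⱼ`, while `Aᵢⱼ - C̄ᵢⱼ = Σ_{k < min(i,j)} C̄ᵢₖ F̄ₖⱼ C̄ₖⱼ`; the filtering
condition makes these two sums agree on `tⱼ`, block by block, hence `M t = A t`.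
-/

open Matrix

/-- The `(i,j)` block of a matrix partitioned into an `N × N` block structure with
diagonal blocks of sizes `b 0, …, b (N-1)`. -/
def blk {N : ℕ} {b : Fin N → ℕ}
    (A : Matrix ((k : Fin N) × Fin (b k)) ((k : Fin N) × Fin (b k)) ℝ)
    (i j : Fin N) : Matrix (Fin (b i)) (Fin (b j)) ℝ :=
  Matrix.of fun x y => A ⟨i, x⟩ ⟨j, y⟩

theorem add_mul_mul_add_of_mul_eq_one {R : Type*} [Ring R] {l u d e : R}
    (hde : d * e = 1) (hed : e * d = 1) :
    (l + d) * e * (u + d) = l * e * u + (l + d + u) := by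
  simp only [add_mul, mul_add, mul_assoc, hed, hde, one_mul, mul_one]
  abel

theorem blockDiagonal'_mul_blockDiagonal'_inv {ι R : Type*} [Fintype ι] [DecidableEq ι]
    [CommRing R] {n : ι → Type*} [∀ k, Fintype (n k)] [∀ k, DecidableEq (n k)]
    (d : ∀ k, Matrix (n k) (n k) R) (hd : ∀ k, IsUnit (d k)) :
    blockDiagonal' d * blockDiagonal' (fun k => (d k)⁻¹) = 1 := by
  rw [← blockDiagonal'_mul, ← blockDiagonal'_one]
  congr 1
  funext k
  exact mul_nonsing_inv _ ((isUnit_iff_isUnit_det _).mp (hd k))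

theorem blockDiagonal'_inv_mul_blockDiagonal' {ι R : Type*} [Fintype ι] [DecidableEq ι]
    [CommRing R] {n : ι → Type*} [∀ k, Fintype (n k)] [∀ k, DecidableEq (n k)]
    (d : ∀ k, Matrix (n k) (n k) R) (hd : ∀ k, IsUnit (d k)) :
    blockDiagonal' (fun k => (d k)⁻¹) * blockDiagonal' d = 1 := by
  rw [← blockDiagonal'_mul, ← blockDiagonal'_one]
  congr 1
  funext k
  exact nonsing_inv_mul _ ((isUnit_iff_isUnit_det _).mp (hd k))

section Blocks

variable {N : ℕ} {b : Fin N → ℕ}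

theorem blk_add (X Y : Matrix ((k : Fin N) × Fin (b k)) ((k : Fin N) × Fin (b k)) ℝ)
    (i j : Fin N) : blk (X + Y) i j = blk X i j + blk Y i j := rfl

theorem blk_blockDiagonal'_self (d : ∀ k : Fin N, Matrix (Fin (b k)) (Fin (b k)) ℝ)
    (k : Fin N) : blk (blockDiagonal' d) k k = d k :=
  congr_fun (blockDiag'_blockDiagonal' d) k

theorem blk_blockDiagonal'_of_ne (d : ∀ k : Fin N, Matrix (Fin (b k)) (Fin (b k)) ℝ)
    {i j : Fin N} (h : i ≠ j) : blk (blockDiagonal' d) i j = 0 := by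
  ext x y
  exact blockDiagonal'_apply_ne d x y h

theorem blk_mul (X Y : Matrix ((k : Fin N) × Fin (b k)) ((k : Fin N) × Fin (b k)) ℝ)
    (i j : Fin N) : blk (X * Y) i j = ∑ k, blk X i k * blk Y k j := by
  ext x y
  simp only [blk, mul_apply, of_apply, Matrix.sum_apply]
  exact Fintype.sum_sigma _

theorem blk_mul_blockDiagonal'
    (X : Matrix ((k : Fin N) × Fin (b k)) ((k : Fin N) × Fin (b k)) ℝ)
    (d : ∀ k : Fin N, Matrix (Fin (b k)) (Fin (b k)) ℝ) (i k : Fin N) :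
    blk (X * blockDiagonal' d) i k = blk X i k * d k := by
  rw [blk_mul, Finset.sum_eq_single k, blk_blockDiagonal'_self]
  · intro l _ hl
    rw [blk_blockDiagonal'_of_ne d hl, Matrix.mul_zero]
  · simp

theorem blk_mulVec_apply (B : Matrix ((k : Fin N) × Fin (b k)) ((k : Fin N) × Fin (b k)) ℝ)
    (v : ((k : Fin N) × Fin (b k)) → ℝ) (i : Fin N) (x : Fin (b i)) :
    (B *ᵥ v) ⟨i, x⟩ = ∑ j, (blk B i j *ᵥ fun y => v ⟨j, y⟩) x := by
  simp only [blk, mulVec, dotProduct, of_apply]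
  exact Fintype.sum_sigma _

theorem mulVec_eq_mulVec_of_blk
    {X Y : Matrix ((k : Fin N) × Fin (b k)) ((k : Fin N) × Fin (b k)) ℝ}
    {v : ((k : Fin N) × Fin (b k)) → ℝ}
    (h : ∀ i j, blk X i j *ᵥ (fun y => v ⟨j, y⟩) = blk Y i j *ᵥ fun y => v ⟨j, y⟩) :
    X *ᵥ v = Y *ᵥ v := by
  funext ⟨i, x⟩
  simp only [blk_mulVec_apply, h]

section Triangular

variable {N : ℕ} {b : Fin N → ℕ} {C : ∀ i j : Fin N, Matrix (Fin (b i)) (Fin (b j)) ℝ}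
  {L U : Matrix ((k : Fin N) × Fin (b k)) ((k : Fin N) × Fin (b k)) ℝ}

theorem blk_add_blockDiagonal'_add
    (hL : ∀ i j : Fin N, j < i → blk L i j = C i j)
    (hL0 : ∀ i j : Fin N, ¬ j < i → blk L i j = 0)
    (hU : ∀ i j : Fin N, i < j → blk U i j = C i j)
    (hU0 : ∀ i j : Fin N, ¬ i < j → blk U i j = 0) (i j : Fin N) :
    blk (L + blockDiagonal' (fun k => C k k) + U) i j = C i j := by
  simp only [blk_add]
  rcases lt_trichotomy i j with h | rfl | h
  · rw [hL0 i j h.not_gt, blk_blockDiagonal'_of_ne _ h.ne, hU i j h, zero_add, zero_add]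
  · rw [hL0 i i (lt_irrefl i), blk_blockDiagonal'_self, hU0 i i (lt_irrefl i), zero_add,
      add_zero]
  · rw [hL i j h, blk_blockDiagonal'_of_ne _ h.ne', hU0 i j h.not_gt, add_zero, add_zero]

theorem blk_mul_blockDiagonal'_mul_eq_sum
    (hL : ∀ i j : Fin N, j < i → blk L i j = C i j)
    (hL0 : ∀ i j : Fin N, ¬ j < i → blk L i j = 0)
    (hU : ∀ i j : Fin N, i < j → blk U i j = C i j)
    (hU0 : ∀ i j : Fin N, ¬ i < j → blk U i j = 0)
    (d : ∀ k : Fin N, Matrix (Fin (b k)) (Fin (b k)) ℝ) (i j : Fin N) :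
    blk (L * blockDiagonal' d * U) i j =
      ∑ k ∈ Finset.univ.filter (fun k : Fin N => k < i ∧ k < j), C i k * d k * C k j := by
  rw [blk_mul, Finset.sum_filter]
  refine Finset.sum_congr rfl fun k _ => ?_
  rw [blk_mul_blockDiagonal']
  split_ifs with h
  · rw [hL i k h.1, hU k j h.2]
  · rcases not_and_or.mp h with hi | hj
    · rw [hL0 i k hi, Matrix.zero_mul, Matrix.zero_mul]
    · rw [hU0 k j hj, Matrix.mul_zero]

end Triangular

theorem blk_eq_add_sum {N : ℕ} {b : Fin N → ℕ}
    {A : Matrix ((k : Fin N) × Fin (b k)) ((k : Fin N) × Fin (b k)) ℝ}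
    {C : ∀ i j : Fin N, Matrix (Fin (b i)) (Fin (b j)) ℝ}
    {F : ∀ k j : Fin N, Matrix (Fin (b k)) (Fin (b k)) ℝ}
    (hC1 : ∀ i j : Fin N, i.1 = 0 ∨ j.1 = 0 → C i j = blk A i j)
    (hC2 : ∀ i j : Fin N, i.1 ≠ 0 → j.1 ≠ 0 →
      C i j = blk A i j -
        ∑ k ∈ Finset.univ.filter (fun k : Fin N => k < i ∧ k < j),
          C i k * F k j * C k j)
    (i j : Fin N) :
    blk A i j = C i j +
      ∑ k ∈ Finset.univ.filter (fun k : Fin N => k < i ∧ k < j), C i k * F k j * C k j := by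
  by_cases hij : i.1 = 0 ∨ j.1 = 0
  · have hempty : Finset.univ.filter (fun k : Fin N => k < i ∧ k < j) = ∅ := by
      refine Finset.filter_false_of_mem fun k _ hk => ?_
      rw [Fin.lt_def, Fin.lt_def] at hk
      omega
    rw [hempty, Finset.sum_empty, add_zero, hC1 i j hij]
  · obtain ⟨hi, hj⟩ := not_or.mp hij
    rw [hC2 i j hi hj, sub_add_cancel]

/-- The block filtering preconditioner `M = (L̄ + D̄) D̄⁻¹ (Ū + D̄)`, built from blocks
`C̄ᵢⱼ = Aᵢⱼ` if `i` or `j` is the first index and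
`C̄ᵢⱼ = Aᵢⱼ - Σ_{k < min(i,j)} L̄ᵢₖ F̄ₖⱼ Ūₖⱼ` otherwise, where each `F̄ₖⱼ` satisfies the
filtering condition `F̄ₖⱼ (Ūₖⱼ tⱼ) = D̄ₖₖ⁻¹ (Ūₖⱼ tⱼ)`, satisfies `M t = A t`. -/
theorem block_filtering_decomposition {N : ℕ} {b : Fin N → ℕ}
    (A : Matrix ((k : Fin N) × Fin (b k)) ((k : Fin N) × Fin (b k)) ℝ)
    (t : ((k : Fin N) × Fin (b k)) → ℝ)
    (C : ∀ i j : Fin N, Matrix (Fin (b i)) (Fin (b j)) ℝ)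
    (F : ∀ k j : Fin N, Matrix (Fin (b k)) (Fin (b k)) ℝ)
    (hD : ∀ k : Fin N, IsUnit (C k k))
    (hC1 : ∀ i j : Fin N, i.1 = 0 ∨ j.1 = 0 → C i j = blk A i j)
    (hC2 : ∀ i j : Fin N, i.1 ≠ 0 → j.1 ≠ 0 →
      C i j = blk A i j -
        ∑ k ∈ Finset.univ.filter (fun k : Fin N => k < i ∧ k < j),
          C i k * F k j * C k j)
    (hF : ∀ k j : Fin N, k < j →
      (F k j) *ᵥ ((C k j) *ᵥ fun y => t ⟨j, y⟩) =
        (C k k)⁻¹ *ᵥ ((C k j) *ᵥ fun y => t ⟨j, y⟩))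
    (L U M : Matrix ((k : Fin N) × Fin (b k)) ((k : Fin N) × Fin (b k)) ℝ)
    (hL : ∀ i j : Fin N, j < i → blk L i j = C i j)
    (hL0 : ∀ i j : Fin N, ¬ j < i → blk L i j = 0)
    (hU : ∀ i j : Fin N, i < j → blk U i j = C i j)
    (hU0 : ∀ i j : Fin N, ¬ i < j → blk U i j = 0)
    (hM : M = (L + blockDiagonal' (fun k => C k k)) *
        blockDiagonal' (fun k => (C k k)⁻¹) *
        (U + blockDiagonal' (fun k => C k k))) :
    M *ᵥ t = A *ᵥ t := by
  rw [hM, add_mul_mul_add_of_mul_eq_one (blockDiagonal'_mul_blockDiagonal'_inv _ hD)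
    (blockDiagonal'_inv_mul_blockDiagonal' _ hD)]
  refine mulVec_eq_mulVec_of_blk fun i j => ?_
  rw [blk_add, blk_mul_blockDiagonal'_mul_eq_sum hL hL0 hU hU0,
    blk_add_blockDiagonal'_add hL hL0 hU hU0, blk_eq_add_sum hC1 hC2, add_comm,
    add_mulVec, add_mulVec, sum_mulVec, sum_mulVec]
  congr 1
  refine Finset.sum_congr rfl fun k hk => ?_
  simp only [← mulVec_mulVec]
  rw [hF k j (Finset.mem_filter.mp hk).2.2]
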